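/- arXiv:1708.00669 — 2 statements merged into one kernel-verified Lean document; each statement's English description precedes it below -/
import Mathlib

section
/- Let p be a two-party behaviour (d outcomes, m inputs per party) satisfying positivity, normalisation, the NBTS conditions, and the classicality equalities. Suppose there exist outcomes a*, b* and a real number ε with 0 < ε < 1 such that p(a*,b*|x,y) ≥ ε for all inputs x, y and p(a*,b*|x*,y*) = ε for some inputs x*, y*. Let p_c be the deterministic behaviour p_c(a,b|x,y) = 1 if a = a* and b = b* (and 0 otherwise), and define p' := (p − ε·p_c)/(1 − ε). Then p' is nonnegative, normalised, satisfies the NBTS conditions and the classicality equalities, and p'(a*,b*|x*,y*) = 0 (so p = ε·p_c + (1−ε)·p' with p' having strictly more zero entries than p). -/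
/-!
The NBTS conditions and the classicality equalities are linear in the behaviour, and the
deterministic behaviour `p_c` satisfies them because it does not depend on the inputs; hence
so does the affine combination `p' = (1 - ε)⁻¹ • (p - ε • p_c)`. Normalisation is preserved
because `p` and `p_c` are both normalised, and `p' ≥ 0` because `p_c` only lowers the entry
`(a*, b*)`, which is at least `ε` everywhere.
-/

open Finset

namespace Behaviour

section Linear

variable (R : Type*) [Semiring R] {α β ι κ : Type*}

def nbtsA [Fintype β] : Submodule R (α → β → ι → κ → R) where
  carrier := {p | ∀ a x x' y, ∑ b, p a b x y = ∑ b, p a b x' y}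
  zero_mem' := by simp
  add_mem' {p q} hp hq a x x' y := by
    simp only [Pi.add_apply, sum_add_distrib, hp a x x' y, hq a x x' y]
  smul_mem' c p hp a x x' y := by
    simp only [Pi.smul_apply, smul_eq_mul, ← mul_sum, hp a x x' y]

def nbtsB [Fintype α] : Submodule R (α → β → ι → κ → R) where
  carrier := {p | ∀ b x y y', ∑ a, p a b x y = ∑ a, p a b x y'}
  zero_mem' := by simp
  add_mem' {p q} hp hq b x y y' := by
    simp only [Pi.add_apply, sum_add_distrib, hp b x y y', hq b x y y']
  smul_mem' c p hp b x y y' := by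
    simp only [Pi.smul_apply, smul_eq_mul, ← mul_sum, hp b x y y']

def classical : Submodule R (α → β → ι → κ → R) where
  carrier := {p | ∀ a b x x' y y', p a b x y + p a b x' y' = p a b x y' + p a b x' y}
  zero_mem' := by simp
  add_mem' {p q} hp hq a b x x' y y' := by
    simp only [Pi.add_apply]
    rw [add_add_add_comm, hp, hq, add_add_add_comm]
  smul_mem' c p hp a b x x' y y' := by
    simp only [Pi.smul_apply, smul_eq_mul]
    rw [← mul_add, hp, mul_add]

variable {R}

theorem const_mem_nbtsA [Fintype β] (g : α → β → R) :
    (fun a b (_ : ι) (_ : κ) => g a b) ∈ nbtsA R := fun _ _ _ _ => rfl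

theorem const_mem_nbtsB [Fintype α] (g : α → β → R) :
    (fun a b (_ : ι) (_ : κ) => g a b) ∈ nbtsB R := fun _ _ _ _ => rfl

theorem const_mem_classical (g : α → β → R) :
    (fun a b (_ : ι) (_ : κ) => g a b) ∈ classical R := fun _ _ _ _ _ _ => add_comm _ _

end Linear

section Peel

variable {K : Type*} [Field K] {α β ι κ : Type*} [DecidableEq α] [DecidableEq β]

def deterministic (a₀ : α) (b₀ : β) : α → β → ι → κ → K :=
  fun a b _ _ => if a = a₀ ∧ b = b₀ then 1 else 0

def peel (ε : K) (a₀ : α) (b₀ : β) (p : α → β → ι → κ → K) :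
    α → β → ι → κ → K :=
  (1 - ε)⁻¹ • (p - ε • deterministic a₀ b₀)

theorem peel_apply (ε : K) (a₀ : α) (b₀ : β) (p : α → β → ι → κ → K) (a b x y) :
    peel ε a₀ b₀ p a b x y =
      (1 - ε)⁻¹ * (p a b x y - ε * if a = a₀ ∧ b = b₀ then 1 else 0) :=
  rfl

theorem peel_mem {S : Submodule K (α → β → ι → κ → K)} {p : α → β → ι → κ → K}
    (ε : K) {a₀ : α} {b₀ : β} (hp : p ∈ S) (hdet : deterministic a₀ b₀ ∈ S) :
    peel ε a₀ b₀ p ∈ S :=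
  S.smul_mem _ (S.sub_mem hp (S.smul_mem ε hdet))

theorem peel_nonneg [LinearOrder K] [IsStrictOrderedRing K] {ε : K} (hε1 : ε < 1)
    {a₀ : α} {b₀ : β} {p : α → β → ι → κ → K}
    (hpos : ∀ a b x y, 0 ≤ p a b x y) (hgeq : ∀ x y, ε ≤ p a₀ b₀ x y) (a b x y) :
    0 ≤ peel ε a₀ b₀ p a b x y := by
  rw [peel_apply]
  refine mul_nonneg (inv_nonneg.mpr (sub_nonneg.mpr hε1.le)) ?_
  split_ifs with h
  · obtain ⟨rfl, rfl⟩ := h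
    linarith [hgeq x y]
  · linarith [hpos a b x y]

theorem sum_sum_peel [Fintype α] [Fintype β] {ε : K} (hε1 : ε ≠ 1) (a₀ : α) (b₀ : β)
    {p : α → β → ι → κ → K} {x : ι} {y : κ} (hnorm : ∑ a, ∑ b, p a b x y = 1) :
    ∑ a, ∑ b, peel ε a₀ b₀ p a b x y = 1 := by
  have hdet : ∑ a, ∑ b, (if a = a₀ ∧ b = b₀ then (1 : K) else 0) = 1 := by
    simp [ite_and]
  simp only [peel_apply, ← mul_sum, sum_sub_distrib, hnorm, hdet, mul_one]
  exact inv_mul_cancel₀ (sub_ne_zero.mpr hε1.symm)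

theorem peel_apply_self {ε : K} {a₀ : α} {b₀ : β} {x₀ : ι} {y₀ : κ}
    {p : α → β → ι → κ → K} (hpt : p a₀ b₀ x₀ y₀ = ε) :
    peel ε a₀ b₀ p a₀ b₀ x₀ y₀ = 0 := by
  simp [peel_apply, hpt]

theorem eq_smul_deterministic_add_smul_peel {ε : K} (hε1 : ε ≠ 1) (a₀ : α) (b₀ : β)
    (p : α → β → ι → κ → K) :
    p = ε • deterministic a₀ b₀ + (1 - ε) • peel ε a₀ b₀ p := by
  rw [peel, smul_inv_smul₀ (sub_ne_zero.mpr hε1.symm), add_sub_cancel]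

theorem peel_eq_zero_of_eq_zero [LinearOrder K] [IsStrictOrderedRing K] {ε : K} (hε0 : 0 < ε)
    {a₀ : α} {b₀ : β} {p : α → β → ι → κ → K} (hgeq : ∀ x y, ε ≤ p a₀ b₀ x y) {a b x y}
    (h0 : p a b x y = 0) : peel ε a₀ b₀ p a b x y = 0 := by
  rw [peel_apply, h0]
  split_ifs with h
  · obtain ⟨rfl, rfl⟩ := h
    linarith [hgeq x y]
  · simp

end Peel

end Behaviour

open Behaviour in
/-- One step of the peeling procedure. If `p` is a behaviour
satisfying positivity, normalisation, NBTS and the classicality equalities,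
with `p(a*,b*|x,y) ≥ ε` everywhere and `p(a*,b*|x*,y*) = ε` for some `0 < ε < 1`,
then `p' := (p − ε·p_c)/(1−ε)` (with `p_c` the deterministic behaviour at
`(a*,b*)`) is a nonnegative, normalised behaviour satisfying NBTS and the
classicality equalities, with `p'(a*,b*|x*,y*) = 0`; moreover
`p = ε·p_c + (1−ε)·p'` and `p'` has strictly more zero entries than `p`
(every zero of `p` is a zero of `p'`, and `(a*,b*,x*,y*)` is a new zero). -/
theorem peeling_step (d m : ℕ)
    (p : Fin d → Fin d → Fin m → Fin m → ℝ)
    (hpos : ∀ a b x y, 0 ≤ p a b x y)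
    (hnorm : ∀ x y, ∑ a, ∑ b, p a b x y = 1)
    (hA : ∀ a x x' y, ∑ b, p a b x y = ∑ b, p a b x' y)
    (hB : ∀ b x y y', ∑ a, p a b x y = ∑ a, p a b x y')
    (hcl : ∀ a b x x' y y',
      p a b x y + p a b x' y' = p a b x y' + p a b x' y)
    (a₀ b₀ : Fin d) (ε : ℝ) (hε0 : 0 < ε) (hε1 : ε < 1)
    (hgeq : ∀ x y, ε ≤ p a₀ b₀ x y)
    (x₀ y₀ : Fin m) (hpt : p a₀ b₀ x₀ y₀ = ε)
    (pc p' : Fin d → Fin d → Fin m → Fin m → ℝ)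
    (hpc : ∀ a b x y,
      pc a b x y = if a = a₀ ∧ b = b₀ then (1 : ℝ) else 0)
    (hp' : ∀ a b x y,
      p' a b x y = (p a b x y - ε * pc a b x y) / (1 - ε)) :
    (∀ a b x y, 0 ≤ p' a b x y) ∧
    (∀ x y, ∑ a, ∑ b, p' a b x y = 1) ∧
    (∀ a x x' y, ∑ b, p' a b x y = ∑ b, p' a b x' y) ∧
    (∀ b x y y', ∑ a, p' a b x y = ∑ a, p' a b x y') ∧
    (∀ a b x x' y y',
      p' a b x y + p' a b x' y' = p' a b x y' + p' a b x' y) ∧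
    p' a₀ b₀ x₀ y₀ = 0 ∧
    (∀ a b x y,
      p a b x y = ε * pc a b x y + (1 - ε) * p' a b x y) ∧
    (∀ a b x y, p a b x y = 0 → p' a b x y = 0) ∧
    p a₀ b₀ x₀ y₀ ≠ 0 := by
  obtain rfl : pc = deterministic a₀ b₀ := by
    funext a b x y
    exact hpc a b x y
  obtain rfl : p' = peel ε a₀ b₀ p := by
    funext a b x y
    rw [hp', div_eq_inv_mul]
    rfl
  have hdecomp := eq_smul_deterministic_add_smul_peel hε1.ne a₀ b₀ p
  refine ⟨peel_nonneg hε1 hpos hgeq, fun x y => sum_sum_peel hε1.ne a₀ b₀ (hnorm x y),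
    peel_mem (S := nbtsA ℝ) ε hA (const_mem_nbtsA _),
    peel_mem (S := nbtsB ℝ) ε hB (const_mem_nbtsB _),
    peel_mem (S := classical ℝ) ε hcl (const_mem_classical _),
    peel_apply_self hpt, fun a b x y => congr_fun₃ (congr_fun hdecomp a) b x y,
    fun a b x y => peel_eq_zero_of_eq_zero hε0 hgeq, hpt ▸ hε0.ne'⟩
end

section
/- The set of extreme points of the binary parallel-timing NBTS polytope (binary two-party behaviours p satisfying positivity, normalisation, and the conditions that ∑_b p(a,b|x,y) is independent of both x and y, and ∑_a p(a,b|x,y) is independent of both x and y) consists of exactly 18 points: the 4 deterministic behaviours p(a,b|x,y) = 1 iff a = α and b = β for α, β ∈ {0,1}; the 8 PR-type behaviours p(a,b|x,y) = 1/2 if a ⊕ b = (x ⊕ γ)(y ⊕ δ) ⊕ ε (and 0 otherwise) for γ, δ, ε ∈ {0,1}; and the 6 linear-correlation behaviours p(a,b|x,y) = 1/2 if a ⊕ b = α·x ⊕ β·y ⊕ δ (and 0 otherwise) for α, β, δ ∈ {0,1} with (α,β) ≠ (0,0), where ⊕ denotes addition mod 2. -/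
/-!
A behaviour with input-independent marginals is determined by the marginals `M = P(a = 0)`,
`N = P(b = 0)` and the four numbers `t x y = p(0,0|x,y)`; the entry `(a, b)` of the table at
`(x, y)` vanishes iff `t x y` equals `0`, `M`, `N` or `M + N - 1` respectively. A point of a
polyhedron `{p ∈ A | p ≥ 0}` is extreme iff it is the only point of `A` vanishing wherever it
vanishes. At an extreme point every table therefore has a zero, and for every direction in which
`(M, N)` could move some table has two zeros whose vanishing values separate along it. The pairs
of zeros that can occur force either `M, N ∈ {0, 1}`, a deterministic behaviour, or
`M = N = 1/2` with `t x y ∈ {0, 1/2}`, the uniform behaviour with `a + b = f x y`, which is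
extreme iff `f` takes both values; these 14 functions are the PR-type and the linear ones.
-/

open Filter Topology Finset Function

theorem mem_extremePoints_polyhedron_iff {ι E : Type*} [Finite ι] [AddCommGroup E] [Module ℝ E]
    (A : AffineSubspace ℝ E) (φ : ι → E →ₗ[ℝ] ℝ) {p : E} :
    p ∈ {q | q ∈ A ∧ ∀ i, 0 ≤ φ i q}.extremePoints ℝ ↔
      (p ∈ A ∧ ∀ i, 0 ≤ φ i p) ∧ ∀ q ∈ A, (∀ i, φ i p = 0 → φ i q = 0) → q = p := by
  refine ⟨fun hp => ⟨hp.1, fun q hq hzero => ?_⟩, fun ⟨hp, huniq⟩ => ⟨hp, ?_⟩⟩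
  · obtain ⟨⟨hpA, hpnn⟩, hext⟩ := hp
    set d := q - p
    have hd : ∀ i, φ i p = 0 → φ i d = 0 := fun i hi => by simp [d, hi, hzero i hi]
    have hsmall : ∀ i, ∀ᶠ ε in 𝓝 (0 : ℝ), 0 ≤ φ i p + ε * φ i d ∧ 0 ≤ φ i p - ε * φ i d := by
      intro i
      rcases (hpnn i).eq_or_lt with hi | hi
      · exact Eventually.of_forall fun ε => by simp [← hi, hd i hi.symm]
      · have h₁ : Tendsto (fun ε : ℝ => φ i p + ε * φ i d) (𝓝 0) (𝓝 (φ i p)) :=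
          (by fun_prop : Continuous fun ε : ℝ => φ i p + ε * φ i d).tendsto' 0 _ (by simp)
        have h₂ : Tendsto (fun ε : ℝ => φ i p - ε * φ i d) (𝓝 0) (𝓝 (φ i p)) :=
          (by fun_prop : Continuous fun ε : ℝ => φ i p - ε * φ i d).tendsto' 0 _ (by simp)
        exact (h₁.eventually (lt_mem_nhds hi)).and (h₂.eventually (lt_mem_nhds hi)) |>.mono
          fun _ h => ⟨h.1.le, h.2.le⟩
    obtain ⟨ε, hεnn, hε⟩ := ((eventually_all.2 hsmall).filter_mono nhdsWithin_le_nhds).and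
      (self_mem_nhdsWithin : ∀ᶠ ε in 𝓝[>] (0 : ℝ), 0 < ε) |>.exists
    have hmem : ∀ s : ℝ, s • d + p ∈ A := fun s => by
      simpa using A.smul_vsub_vadd_mem s hq hpA hpA
    have hseg : p ∈ openSegment ℝ (ε • d + p) ((-ε) • d + p) :=
      ⟨1 / 2, 1 / 2, by norm_num, by norm_num, by norm_num, by module⟩
    have hfix : ε • d + p = p := hext ⟨hmem ε, fun i => by simpa [add_comm] using (hεnn i).1⟩
      ⟨hmem (-ε), fun i => by simpa [add_comm, sub_eq_add_neg] using (hεnn i).2⟩ hseg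
    simpa [d, sub_eq_zero, hε.ne'] using hfix
  · rintro q₁ ⟨hq₁A, hq₁⟩ q₂ ⟨-, hq₂⟩ ⟨a, b, ha, hb, -, rfl⟩
    refine huniq q₁ hq₁A fun i hi => ?_
    simp only [map_add, map_smul, smul_eq_mul] at hi
    have := (add_eq_zero_iff_of_nonneg (mul_nonneg ha.le (hq₁ i)) (mul_nonneg hb.le (hq₂ i))).1 hi
    simpa [ha.ne'] using this.1

abbrev Behaviour := Fin 2 → Fin 2 → Fin 2 → Fin 2 → ℝ

def parallelNBTS : AffineSubspace ℝ Behaviour where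
  carrier := {p | (∀ x y, ∑ a, ∑ b, p a b x y = 1) ∧
    (∀ a x x' y y', ∑ b, p a b x y = ∑ b, p a b x' y') ∧
    (∀ b x x' y y', ∑ a, p a b x y = ∑ a, p a b x' y')}
  smul_vsub_vadd_mem' c p q r hp hq hr := by
    simp only [Set.mem_ofPred_eq, vsub_eq_sub, vadd_eq_add, Pi.add_apply, Pi.smul_apply,
      Pi.sub_apply, smul_eq_mul, sum_add_distrib, ← mul_sum, sum_sub_distrib] at hp hq hr ⊢
    refine ⟨fun x y => ?_, fun a x x' y y' => ?_, fun b x x' y y' => ?_⟩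
    · rw [hp.1, hq.1, hr.1]; ring
    · rw [hp.2.1 a x x' y y', hq.2.1 a x x' y y', hr.2.1 a x x' y y']
    · rw [hp.2.2 b x x' y y', hq.2.2 b x x' y y', hr.2.2 b x x' y y']

def Behaviour.entry (i : Fin 2 × Fin 2 × Fin 2 × Fin 2) : Behaviour →ₗ[ℝ] ℝ where
  toFun p := p i.1 i.2.1 i.2.2.1 i.2.2.2
  map_add' _ _ := rfl
  map_smul' _ _ := rfl

def nbtsPolytope : Set Behaviour :=
  {p | (∀ a b x y, 0 ≤ p a b x y) ∧
    (∀ x y, ∑ a, ∑ b, p a b x y = 1) ∧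
    (∀ a x x' y y', ∑ b, p a b x y = ∑ b, p a b x' y') ∧
    (∀ b x x' y y', ∑ a, p a b x y = ∑ a, p a b x' y')}

theorem nbtsPolytope_eq :
    nbtsPolytope = {p | p ∈ parallelNBTS ∧ ∀ i, 0 ≤ Behaviour.entry i p} := by
  ext p
  simp only [nbtsPolytope, Set.mem_ofPred_eq, Prod.forall, Behaviour.entry, LinearMap.coe_mk,
    AddHom.coe_mk]
  exact and_comm

theorem mem_extremePoints_nbtsPolytope_iff {p : Behaviour} :
    p ∈ nbtsPolytope.extremePoints ℝ ↔ p ∈ nbtsPolytope ∧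
      ∀ q ∈ parallelNBTS, (∀ a b x y, p a b x y = 0 → q a b x y = 0) → q = p := by
  rw [nbtsPolytope_eq, mem_extremePoints_polyhedron_iff]
  simp only [Behaviour.entry, LinearMap.coe_mk, AddHom.coe_mk, Prod.forall, Set.mem_ofPred_eq]

def ofMarginals (M N : ℝ) (t : Fin 2 → Fin 2 → ℝ) : Behaviour :=
  fun a b x y => !![t x y, M - t x y; N - t x y, 1 - M - N + t x y] a b

def vanishingValue (M N : ℝ) : Matrix (Fin 2) (Fin 2) ℝ := !![0, M; N, M + N - 1]

theorem ofMarginals_mem_parallelNBTS (M N : ℝ) (t : Fin 2 → Fin 2 → ℝ) :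
    ofMarginals M N t ∈ parallelNBTS := by
  refine ⟨fun x y => ?_, fun a x x' y y' => ?_, fun b x x' y y' => ?_⟩
  · simp [ofMarginals, Fin.sum_univ_two]
  · fin_cases a <;> simp [ofMarginals, Fin.sum_univ_two]
  · fin_cases b <;> simp [ofMarginals, Fin.sum_univ_two]

theorem exists_eq_ofMarginals {p : Behaviour} (hp : p ∈ parallelNBTS) :
    ∃ M N t, p = ofMarginals M N t := by
  obtain ⟨hsum, hrow, hcol⟩ := hp
  refine ⟨p 0 0 0 0 + p 0 1 0 0, p 0 0 0 0 + p 1 0 0 0, p 0 0, ?_⟩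
  funext a b x y
  have h₁ := hsum x y
  have h₂ := hrow 0 x 0 y 0
  have h₃ := hcol 0 x 0 y 0
  simp only [Fin.sum_univ_two] at h₁ h₂ h₃
  fin_cases a <;> fin_cases b <;> simp [ofMarginals] <;> linarith

theorem ofMarginals_inj {M N M' N' : ℝ} {t t' : Fin 2 → Fin 2 → ℝ} :
    ofMarginals M N t = ofMarginals M' N' t' ↔ M = M' ∧ N = N' ∧ t = t' := by
  refine ⟨fun h => ?_, by rintro ⟨rfl, rfl, rfl⟩; rfl⟩
  have h00 (x y : Fin 2) : t x y = t' x y := by simpa [ofMarginals] using congrArg (· 0 0 x y) h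
  have h01 : M - t 0 0 = M' - t' 0 0 := by simpa [ofMarginals] using congrArg (· 0 1 0 0) h
  have h10 : N - t 0 0 = N' - t' 0 0 := by simpa [ofMarginals] using congrArg (· 1 0 0 0) h
  rw [h00] at h01 h10
  exact ⟨by linarith, by linarith, funext₂ h00⟩

theorem ofMarginals_eq_zero_iff {M N : ℝ} {t : Fin 2 → Fin 2 → ℝ} {a b x y : Fin 2} :
    ofMarginals M N t a b x y = 0 ↔ t x y = vanishingValue M N a b := by
  fin_cases a <;> fin_cases b <;> simp [ofMarginals, vanishingValue] <;>
    constructor <;> intro <;> linarith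

def deterministic (α β : Fin 2) : Behaviour := fun a b _ _ => if a = α ∧ b = β then 1 else 0

noncomputable def xorBehaviour (f : Fin 2 → Fin 2 → Fin 2) : Behaviour :=
  fun a b x y => if a + b = f x y then 1 / 2 else 0

def deterministicBehaviours : Set Behaviour := {p | ∃ α β, p = deterministic α β}

def prBehaviours : Set Behaviour :=
  {p | ∃ γ δ ε : Fin 2, p = xorBehaviour fun x y => (x + γ) * (y + δ) + ε}

def linearBehaviours : Set Behaviour :=
  {p | ∃ α β δ : Fin 2, ¬(α = 0 ∧ β = 0) ∧ p = xorBehaviour fun x y => α * x + β * y + δ}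

theorem xorBehaviour_eq_ofMarginals (f : Fin 2 → Fin 2 → Fin 2) :
    xorBehaviour f = ofMarginals (1 / 2) (1 / 2) fun x y => if f x y = 0 then 1 / 2 else 0 := by
  funext a b x y
  rcases (by omega : f x y = 0 ∨ f x y = 1) with h | h <;>
    fin_cases a <;> fin_cases b <;> simp [xorBehaviour, ofMarginals, h] <;> norm_num

section ExtremePoint

variable {M N : ℝ} {t : Fin 2 → Fin 2 → ℝ}

theorem ofMarginals_eq_of_mem_extremePoints {M' N' : ℝ} {t' : Fin 2 → Fin 2 → ℝ}
    (hp : ofMarginals M N t ∈ nbtsPolytope.extremePoints ℝ)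
    (h : ∀ a b x y, t x y = vanishingValue M N a b → t' x y = vanishingValue M' N' a b) :
    M' = M ∧ N' = N ∧ t' = t :=
  ofMarginals_inj.1 <| (mem_extremePoints_nbtsPolytope_iff.1 hp).2 _
    (ofMarginals_mem_parallelNBTS _ _ _) fun a b x y => by simpa only [ofMarginals_eq_zero_iff] using h a b x y

theorem exists_vanishingValue_of_mem_extremePoints
    (hp : ofMarginals M N t ∈ nbtsPolytope.extremePoints ℝ) (x y : Fin 2) :
    ∃ a b, t x y = vanishingValue M N a b := by
  by_contra! h
  have := ofMarginals_eq_of_mem_extremePoints hp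
    (t' := fun x' y' => if x' = x ∧ y' = y then t x y + 1 else t x' y') fun a b x' y' h' => by
      split_ifs with hxy
      · obtain ⟨rfl, rfl⟩ := hxy
        exact absurd h' (h a b)
      · exact h'
  simpa using congrFun₂ this.2.2 x y

theorem exists_vanishingValue_collision {M' N' : ℝ}
    (hp : ofMarginals M N t ∈ nbtsPolytope.extremePoints ℝ) (hne : (M', N') ≠ (M, N)) :
    ∃ x y a b a' b', t x y = vanishingValue M N a b ∧ t x y = vanishingValue M N a' b' ∧
      vanishingValue M' N' a b ≠ vanishingValue M' N' a' b' := by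
  classical
  by_contra! h
  let t' x y := if hz : ∃ ab : Fin 2 × Fin 2, t x y = vanishingValue M N ab.1 ab.2 then
    vanishingValue M' N' hz.choose.1 hz.choose.2 else 0
  obtain ⟨rfl, rfl, -⟩ := ofMarginals_eq_of_mem_extremePoints hp (t' := t') fun a b x y hab => by
    have hz : ∃ ab : Fin 2 × Fin 2, t x y = vanishingValue M N ab.1 ab.2 := ⟨(a, b), hab⟩
    simp only [t', dif_pos hz]
    exact h x y _ _ a b hz.choose_spec hab
  exact hne rfl

theorem vanishingValue_collision {M' N' : ℝ} {a b a' b' : Fin 2}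
    (h : vanishingValue M N a b = vanishingValue M N a' b')
    (h' : vanishingValue M' N' a b ≠ vanishingValue M' N' a' b') :
    M = 0 ∧ M' ≠ 0 ∨ M = 1 ∧ M' ≠ 1 ∨ N = 0 ∧ N' ≠ 0 ∨ N = 1 ∧ N' ≠ 1 ∨
      M + N = 1 ∧ M' + N' ≠ 1 ∨ M = N ∧ M' ≠ N' := by
  fin_cases a <;> fin_cases b <;> fin_cases a' <;> fin_cases b' <;>
    simp [vanishingValue] at h h' ⊢ <;> grind

theorem marginals_of_mem_extremePoints (hp : ofMarginals M N t ∈ nbtsPolytope.extremePoints ℝ) :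
    (M = 0 ∨ M = 1) ∧ (N = 0 ∨ N = 1) ∨ M = 1 / 2 ∧ N = 1 / 2 := by
  have key (M' N' : ℝ) (hne : (M', N') ≠ (M, N)) :=
    have ⟨_, _, _, _, _, _, h₁, h₂, hne'⟩ := exists_vanishingValue_collision hp hne
    vanishingValue_collision (h₁ ▸ h₂) hne'
  have := key (M + 1) (N - 1) (by simp)
  have := key (M + 1) (N + 1) (by simp)
  have := key M (N + 1) (by simp)
  have := key (M + 1) N (by simp)
  grind

theorem ofMarginals_mem_deterministicBehaviours (hp : ofMarginals M N t ∈ nbtsPolytope)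
    (hM : M = 0 ∨ M = 1) (hN : N = 0 ∨ N = 1) : ofMarginals M N t ∈ deterministicBehaviours := by
  have ht (x y : Fin 2) : t x y = M * N := by
    have h₀₀ := hp.1 0 0 x y
    have h₀₁ := hp.1 0 1 x y
    have h₁₀ := hp.1 1 0 x y
    have h₁₁ := hp.1 1 1 x y
    simp only [ofMarginals, Matrix.of_apply, Matrix.cons_val', Matrix.cons_val_zero,
      Matrix.cons_val_one, Matrix.empty_val', Matrix.cons_val_fin_one] at h₀₀ h₀₁ h₁₀ h₁₁
    rcases hM with rfl | rfl <;> rcases hN with rfl | rfl <;> linarith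
  refine ⟨if M = 1 then 0 else 1, if N = 1 then 0 else 1, ?_⟩
  funext a b x y
  rcases hM with rfl | rfl <;> rcases hN with rfl | rfl <;> fin_cases a <;> fin_cases b <;>
    simp [ofMarginals, deterministic, ht]

theorem ofMarginals_half_mem_image_xorBehaviour
    (hp : ofMarginals (1 / 2) (1 / 2) t ∈ nbtsPolytope.extremePoints ℝ) :
    ofMarginals (1 / 2) (1 / 2) t ∈ xorBehaviour '' {f | (uncurry f).Surjective} := by
  have ht (x y : Fin 2) : t x y = 0 ∨ t x y = 1 / 2 := by
    obtain ⟨a, b, h⟩ := exists_vanishingValue_of_mem_extremePoints hp x y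
    fin_cases a <;> fin_cases b <;> norm_num [vanishingValue, h]
  have hzero : ∃ x y, t x y = 0 := by
    by_contra! h
    -- otherwise every zero is off-diagonal, and these allow moving `(M, N)` along `M = N`
    obtain ⟨x, y, a, b, a', b', h₁, h₂, hne⟩ :=
      exists_vanishingValue_collision (M' := 1) (N' := 1) hp (by norm_num)
    rw [(ht x y).resolve_left (h x y)] at h₁ h₂
    revert h₁ h₂ hne
    fin_cases a <;> fin_cases b <;> fin_cases a' <;> fin_cases b' <;> norm_num [vanishingValue]
  have hhalf : ∃ x y, t x y = 1 / 2 := by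
    by_contra! h
    -- otherwise every zero is diagonal, and these allow moving `(M, N)` along `M + N = 1`
    obtain ⟨x, y, a, b, a', b', h₁, h₂, hne⟩ :=
      exists_vanishingValue_collision (M' := 1) (N' := 0) hp (by norm_num)
    rw [(ht x y).resolve_right (h x y)] at h₁ h₂
    revert h₁ h₂ hne
    fin_cases a <;> fin_cases b <;> fin_cases a' <;> fin_cases b' <;> norm_num [vanishingValue]
  refine ⟨fun x y => if t x y = 0 then 1 else 0, fun c => ?_, ?_⟩
  · fin_cases c
    · obtain ⟨x, y, h⟩ := hhalf
      exact ⟨(x, y), by simp [h]⟩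
    · obtain ⟨x, y, h⟩ := hzero
      exact ⟨(x, y), by simp [h]⟩
  · rw [xorBehaviour_eq_ofMarginals, ofMarginals_inj]
    refine ⟨rfl, rfl, funext₂ fun x y => ?_⟩
    rcases ht x y with h | h <;> simp [h]

end ExtremePoint

theorem deterministic_mem_nbtsPolytope (α β : Fin 2) : deterministic α β ∈ nbtsPolytope := by
  refine ⟨fun a b x y => ?_, fun x y => ?_, fun a x x' y y' => rfl, fun b x x' y y' => rfl⟩
  · unfold deterministic
    split_ifs <;> norm_num
  · fin_cases α <;> fin_cases β <;> simp only [deterministic, Fin.sum_univ_two] <;> norm_num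

theorem xorBehaviour_mem_nbtsPolytope (f : Fin 2 → Fin 2 → Fin 2) :
    xorBehaviour f ∈ nbtsPolytope := by
  rw [nbtsPolytope_eq]
  refine ⟨xorBehaviour_eq_ofMarginals f ▸ ofMarginals_mem_parallelNBTS _ _ _, fun i => ?_⟩
  simp only [Behaviour.entry, LinearMap.coe_mk, AddHom.coe_mk, xorBehaviour]
  split_ifs <;> norm_num

theorem deterministic_mem_extremePoints (α β : Fin 2) :
    deterministic α β ∈ nbtsPolytope.extremePoints ℝ := by
  refine mem_extremePoints_nbtsPolytope_iff.2
    ⟨deterministic_mem_nbtsPolytope α β, fun q hq hzero => ?_⟩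
  have hq₀ (a b x y : Fin 2) (hab : ¬(a = α ∧ b = β)) : q a b x y = 0 :=
    hzero a b x y (if_neg hab)
  funext a b x y
  by_cases hab : a = α ∧ b = β
  · obtain ⟨rfl, rfl⟩ := hab
    have hsum := hq.1 x y
    rw [← Fintype.sum_prod_type', Fintype.sum_eq_single (a, b)
      fun ab hne => hq₀ _ _ _ _ fun h => hne (Prod.ext h.1 h.2)] at hsum
    simpa [deterministic] using hsum
  · simp [deterministic, hab, hq₀ a b x y hab]

theorem xorBehaviour_mem_extremePoints {f : Fin 2 → Fin 2 → Fin 2} (hf : (uncurry f).Surjective) :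
    xorBehaviour f ∈ nbtsPolytope.extremePoints ℝ := by
  refine mem_extremePoints_nbtsPolytope_iff.2
    ⟨xorBehaviour_mem_nbtsPolytope f, fun q hq hzero => ?_⟩
  obtain ⟨M, N, t, rfl⟩ := exists_eq_ofMarginals hq
  simp only [ofMarginals_eq_zero_iff] at hzero
  have hvanish (a b x y : Fin 2) (h : a + b ≠ f x y) : t x y = vanishingValue M N a b :=
    hzero a b x y (if_neg h)
  obtain ⟨⟨x₀, y₀⟩, h₀⟩ := hf 0
  obtain ⟨⟨x₁, y₁⟩, h₁⟩ := hf 1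
  simp only [uncurry_apply_pair] at h₀ h₁
  -- the off-diagonal zeros at `(x₀, y₀)` force `M = N`, the diagonal ones at `(x₁, y₁)` force
  -- `M + N = 1`
  have e₁ := hvanish 0 1 x₀ y₀ (by simp [h₀])
  have e₂ := hvanish 1 0 x₀ y₀ (by simp [h₀])
  have e₃ := hvanish 0 0 x₁ y₁ (by simp [h₁])
  have e₄ := hvanish 1 1 x₁ y₁ (by simp [h₁])
  simp only [vanishingValue, Matrix.of_apply, Matrix.cons_val', Matrix.cons_val_zero,
    Matrix.cons_val_one, Matrix.empty_val', Matrix.cons_val_fin_one] at e₁ e₂ e₃ e₄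
  have hM : M = 1 / 2 := by linarith
  rw [xorBehaviour_eq_ofMarginals, ofMarginals_inj]
  refine ⟨hM, by linarith, funext₂ fun x y => ?_⟩
  obtain h | h : f x y = 0 ∨ f x y = 1 := by omega
  · simpa [vanishingValue, h, hM] using hvanish 0 1 x y (by simp [h])
  · simpa [vanishingValue, h] using hvanish 0 0 x y (by simp [h])

theorem surjective_uncurry_iff (f : Fin 2 → Fin 2 → Fin 2) :
    (uncurry f).Surjective ↔ (∃ γ δ ε, f = fun x y => (x + γ) * (y + δ) + ε) ∨
      ∃ α β δ, ¬(α = 0 ∧ β = 0) ∧ f = fun x y => α * x + β * y + δ := by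
  revert f
  decide

theorem prBehaviours_union_linearBehaviours :
    prBehaviours ∪ linearBehaviours = xorBehaviour '' {f | (uncurry f).Surjective} := by
  ext p
  simp only [prBehaviours, linearBehaviours, Set.mem_union, Set.mem_image, Set.mem_ofPred_eq,
    surjective_uncurry_iff]
  constructor
  · rintro (⟨γ, δ, ε, rfl⟩ | ⟨α, β, δ, h, rfl⟩)
    exacts [⟨_, Or.inl ⟨γ, δ, ε, rfl⟩, rfl⟩, ⟨_, Or.inr ⟨α, β, δ, h, rfl⟩, rfl⟩]
  · rintro ⟨f, ⟨γ, δ, ε, rfl⟩ | ⟨α, β, δ, h, rfl⟩, rfl⟩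
    exacts [Or.inl ⟨γ, δ, ε, rfl⟩, Or.inr ⟨α, β, δ, h, rfl⟩]

theorem extremePoints_nbtsPolytope :
    nbtsPolytope.extremePoints ℝ = deterministicBehaviours ∪ prBehaviours ∪ linearBehaviours := by
  rw [Set.union_assoc, prBehaviours_union_linearBehaviours]
  ext p
  refine ⟨fun hp => ?_, ?_⟩
  · obtain ⟨M, N, t, rfl⟩ := exists_eq_ofMarginals hp.1.2
    rcases marginals_of_mem_extremePoints hp with ⟨hM, hN⟩ | ⟨rfl, rfl⟩
    · exact Or.inl (ofMarginals_mem_deterministicBehaviours hp.1 hM hN)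
    · exact Or.inr (ofMarginals_half_mem_image_xorBehaviour hp)
  · rintro (⟨α, β, rfl⟩ | ⟨f, hf, rfl⟩)
    exacts [deterministic_mem_extremePoints α β, xorBehaviour_mem_extremePoints hf]

theorem deterministic_injective : (uncurry deterministic).Injective := by
  rintro ⟨α, β⟩ ⟨α', β'⟩ h
  have := congrArg (· α β 0 0) h
  by_contra hne
  simp_all [deterministic]

theorem xorBehaviour_injective : xorBehaviour.Injective := by
  intro f g h
  funext x y
  by_contra hne
  simpa [xorBehaviour, hne] using congrArg (· 0 (f x y) x y) h

theorem deterministic_ne_xorBehaviour (α β : Fin 2) (f : Fin 2 → Fin 2 → Fin 2) :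
    deterministic α β ≠ xorBehaviour f := fun h => by
  have := congrArg (· α β 0 0) h
  simp only [deterministic, xorBehaviour, and_self, if_true] at this
  split_ifs at this <;> norm_num at this

theorem ncard_extremeBehaviours :
    (deterministicBehaviours ∪ prBehaviours ∪ linearBehaviours).ncard = 18 := by
  have hD : deterministicBehaviours = Set.range (uncurry deterministic) := by
    ext p
    simp [deterministicBehaviours, eq_comm]
  rw [Set.union_assoc, prBehaviours_union_linearBehaviours, hD,
    Set.ncard_union_eq (Set.disjoint_left.2 ?_) (Set.finite_range _) ((Set.toFinite _).image _),
    Set.ncard_range_of_injective deterministic_injective,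
    Set.ncard_image_of_injective _ xorBehaviour_injective, Set.ncard_eq_toFinset_card',
    Nat.card_eq_fintype_card]
  · decide
  · rintro _ ⟨⟨α, β⟩, rfl⟩ ⟨f, -, h⟩
    exact deterministic_ne_xorBehaviour α β f h.symm

/-- The extreme points of the binary parallel-timing NBTS polytope
are exactly the 4 constant deterministic behaviours, the 8 PR-type behaviours
and the 6 linear-correlation behaviours (18 points in total).
(Here `Fin 2` arithmetic is mod 2.) -/
theorem extremePoints_binary_parallel_nbts_polytope :
    ({p : Fin 2 → Fin 2 → Fin 2 → Fin 2 → ℝ |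
        (∀ a b x y, 0 ≤ p a b x y) ∧
        (∀ x y, ∑ a, ∑ b, p a b x y = 1) ∧
        (∀ a x x' y y', ∑ b, p a b x y = ∑ b, p a b x' y') ∧
        (∀ b x x' y y', ∑ a, p a b x y = ∑ a, p a b x' y')}.extremePoints ℝ
      =
      {p : Fin 2 → Fin 2 → Fin 2 → Fin 2 → ℝ |
        ∃ α β : Fin 2, p = fun a b _ _ =>
          if a = α ∧ b = β then (1 : ℝ) else 0} ∪
      {p : Fin 2 → Fin 2 → Fin 2 → Fin 2 → ℝ |
        ∃ γ δ ε : Fin 2, p = fun a b x y =>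
          if a + b = (x + γ) * (y + δ) + ε then (1 : ℝ) / 2 else 0} ∪
      {p : Fin 2 → Fin 2 → Fin 2 → Fin 2 → ℝ |
        ∃ α β δ : Fin 2, ¬(α = 0 ∧ β = 0) ∧ p = fun a b x y =>
          if a + b = α * x + β * y + δ then (1 : ℝ) / 2 else 0})
    ∧
    ({p : Fin 2 → Fin 2 → Fin 2 → Fin 2 → ℝ |
        ∃ α β : Fin 2, p = fun a b _ _ =>
          if a = α ∧ b = β then (1 : ℝ) else 0} ∪
      {p : Fin 2 → Fin 2 → Fin 2 → Fin 2 → ℝ |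
        ∃ γ δ ε : Fin 2, p = fun a b x y =>
          if a + b = (x + γ) * (y + δ) + ε then (1 : ℝ) / 2 else 0} ∪
      {p : Fin 2 → Fin 2 → Fin 2 → Fin 2 → ℝ |
        ∃ α β δ : Fin 2, ¬(α = 0 ∧ β = 0) ∧ p = fun a b x y =>
          if a + b = α * x + β * y + δ then (1 : ℝ) / 2 else 0}).ncard = 18 :=
  ⟨extremePoints_nbtsPolytope, ncard_extremeBehaviours⟩
end
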